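/- Let p be a prime with p > 3 and let H₁ and H₂ be subgroups of GL₂(ℤ/p²ℤ) that are locally conjugate in GL₂(ℤ/p²ℤ). If, for each i = 1, 2, every element of GL₂(ℤ/pℤ) of determinant 1 lies in φ(Hᵢ), then H₁ = H₂. -/

import Mathlib

open Matrix

/-- `GL₂(ℤ/nℤ)`. -/
abbrev GL2 (n : ℕ) : Type := GL (Fin 2) (ZMod n)

/-- Reduction modulo `p` from `ℤ/p²ℤ` to `ℤ/pℤ`. -/
def red (p : ℕ) : ZMod (p^2) →+* ZMod p :=
  ZMod.castHom (dvd_pow_self p (by norm_num)) (ZMod p)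

/-- The natural homomorphism `φ : GL₂(ℤ/p²ℤ) →* GL₂(ℤ/pℤ)` given by entrywise
reduction modulo `p`. -/
def phi (p : ℕ) : GL2 (p^2) →* GL2 p :=
  Matrix.GeneralLinearGroup.map (red p)

/-- The element `1 + p • A` of `GL₂(ℤ/p²ℤ)` (its inverse is `1 - p • A`). -/
def kerUnit {p : ℕ} (A : Matrix (Fin 2) (Fin 2) (ZMod (p^2))) : GL2 (p^2) where
  val := 1 + (p : ZMod (p^2)) • A
  inv := 1 - (p : ZMod (p^2)) • A
  val_inv := by
    have h : ((p : ZMod (p^2)) • A) * ((p : ZMod (p^2)) • A) = 0 := by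
      rw [smul_mul_assoc, mul_smul_comm, smul_smul, ← Nat.cast_mul, ← pow_two,
        ZMod.natCast_self, zero_smul]
    rw [add_mul, one_mul, mul_sub, mul_one, h, sub_zero]
    abel
  inv_val := by
    have h : ((p : ZMod (p^2)) • A) * ((p : ZMod (p^2)) • A) = 0 := by
      rw [smul_mul_assoc, mul_smul_comm, smul_smul, ← Nat.cast_mul, ← pow_two,
        ZMod.natCast_self, zero_smul]
    rw [sub_mul, one_mul, mul_add, mul_one, h, add_zero]
    abel

/-- The antidiagonal swap matrix `!![0,1;1,0]` as an element of `GL₂(ℤ/p²ℤ)`. -/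
def swapGL (p : ℕ) : GL2 (p^2) where
  val := !![0, 1; 1, 0]
  inv := !![0, 1; 1, 0]
  val_inv := by
    ext i j
    fin_cases i <;> fin_cases j <;>
      simp [Matrix.mul_apply, Fin.sum_univ_succ, Matrix.one_apply]
  inv_val := by
    ext i j
    fin_cases i <;> fin_cases j <;>
      simp [Matrix.mul_apply, Fin.sum_univ_succ, Matrix.one_apply]

/-- Subgroups `H₁` and `H₂` of a group `G` are locally conjugate in `G` if there is a
bijection `f : H₁ → H₂` such that `h` and `f h` are conjugate in `G` for every `h ∈ H₁`. -/
def IsLocallyConjugate {G : Type*} [Group G] (H₁ H₂ : Subgroup G) : Prop :=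
  ∃ f : H₁ ≃ H₂, ∀ h : H₁, IsConj (h : G) ((f h : G))

/-- Subgroups `H₁` and `H₂` of `G` are conjugate in `G`: `g H₁ g⁻¹ = H₂` for some `g`. -/
def IsConjugateSubgroup {G : Type*} [Group G] (H₁ H₂ : Subgroup G) : Prop :=
  ∃ g : G, Subgroup.map (MulAut.conj g).toMonoidHom H₁ = H₂

/-- Nontrivially locally conjugate: locally conjugate but not conjugate. -/
def IsNontriviallyLocallyConjugate {G : Type*} [Group G] (H₁ H₂ : Subgroup G) : Prop :=
  IsLocallyConjugate H₁ H₂ ∧ ¬ IsConjugateSubgroup H₁ H₂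

/-!
Let `p > 3` and let `H ≤ GL₂(ℤ/p²)` with `φ(H) ⊇ SL₂(𝔽_p)`. If `g ∈ H` lifts `1 + N` with
`N² = 0`, then `g ^ p = 1 + pN`; these `N` span the trace-zero matrices modulo `p`, so
`1 + pA ∈ H` whenever `tr A ≡ 0 (mod p)`. Since `SL₂(𝔽_p)` is perfect, every element of
`SL₂(𝔽_p)` has a lift in `⁅H, H⁆`, which has determinant `1`; comparing `g ∈ SL₂(ℤ/p²)` with
such a lift puts `g` in `H`. So `H` is the full preimage of `det H`, and locally conjugate
subgroups, having the same determinants, coincide.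
-/

open scoped MatrixGroups

theorem IsLocallyConjugate.symm {G : Type*} [Group G] {H₁ H₂ : Subgroup G}
    (h : IsLocallyConjugate H₁ H₂) : IsLocallyConjugate H₂ H₁ := by
  obtain ⟨f, hf⟩ := h
  exact ⟨f.symm, fun k => by simpa using (hf (f.symm k)).symm⟩

theorem IsLocallyConjugate.le_of_ker_le {G A : Type*} [Group G] [CommGroup A]
    {H₁ H₂ : Subgroup G} (h : IsLocallyConjugate H₁ H₂) {χ : G →* A} (hχ : χ.ker ≤ H₂) :
    H₁ ≤ H₂ := by
  obtain ⟨f, hf⟩ := h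
  intro g hg
  set g' : H₂ := f ⟨g, hg⟩
  have hχg : χ g = χ g' := isConj_iff_eq.mp (χ.map_isConj (hf ⟨g, hg⟩))
  have hquot : g * (g' : G)⁻¹ ∈ H₂ :=
    hχ (by rw [MonoidHom.mem_ker, map_mul, map_inv, hχg, mul_inv_cancel])
  simpa using mul_mem hquot g'.2

theorem natCast_mul_self_eq_zero {p : ℕ} {R : Type*} [NonAssocSemiring R] [CharP R (p ^ 2)] :
    (p : R) * p = 0 := by
  rw [← Nat.cast_mul, ← sq, CharP.cast_eq_zero]

theorem natCast_mul_mul_natCast_mul {p : ℕ} {R : Type*} [Ring R] [CharP R (p ^ 2)] (a b : R) :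
    (p * a) * (p * b) = 0 := by
  rw [mul_assoc, ← mul_assoc a, ← (Nat.cast_commute p a).eq, mul_assoc, ← mul_assoc,
    natCast_mul_self_eq_zero, zero_mul]

theorem one_add_pow_prime_eq_of_mul_self_eq {R : Type*} [Ring R] {p : ℕ} (hp : p.Prime)
    (hp3 : 3 < p) (hpp : (p : R) * p = 0) {X Y : R} (hX : X * X = p * Y) :
    (1 + X) ^ p = 1 + p * X := by
  have hpp' : ∀ Z : R, (p : R) * (p * Z) = 0 := fun Z => by rw [← mul_assoc, hpp, zero_mul]
  have hXX : ∀ m, X ^ (m + 2) = p * (X ^ m * Y) := fun m => by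
    rw [pow_add, sq, hX, ← mul_assoc, ← (Nat.cast_commute p _).eq, mul_assoc]
  have hXp : X ^ p = 0 := by
    have h4 : X ^ 4 = 0 := by rw [hXX, hXX, pow_zero, one_mul, mul_assoc, hpp']
    rw [← Nat.sub_add_cancel (show 4 ≤ p by omega), pow_add, h4, mul_zero]
  have hmid : ∀ m, m + 2 < p → X ^ (m + 2) * (p.choose (m + 2) : R) = 0 := by
    intro m hm
    obtain ⟨k, hk⟩ := hp.dvd_choose_self (by omega) hm
    rw [← (Nat.cast_commute _ _).eq, hk, hXX, Nat.cast_mul, Nat.cast_comm, mul_assoc, hpp',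
      mul_zero]
  -- in the binomial expansion only the terms `1` and `p * X` survive
  obtain ⟨n, rfl⟩ : ∃ n, p = n + 4 := ⟨p - 4, by omega⟩
  rw [add_comm, (Commute.one_right X).add_pow, Finset.sum_range_succ, Finset.sum_range_succ',
    Finset.sum_range_succ', Finset.sum_eq_zero fun m hm => by
      rw [one_pow, mul_one]; exact hmid m (by have := Finset.mem_range.mp hm; omega)]
  simp only [zero_add, pow_one, pow_zero, one_pow, mul_one, Nat.choose_one_right,
    Nat.choose_zero_right, Nat.cast_one, hXp, zero_mul, add_zero]
  rw [add_comm, Nat.cast_comm]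

theorem natCast_ne_zero_of_lt {p n : ℕ} (hn : 0 < n) (hnp : n < p) : (n : ZMod p) ≠ 0 := by
  rw [Ne, ZMod.natCast_eq_zero_iff]
  exact Nat.not_dvd_of_pos_of_lt hn hnp

section

variable {p : ℕ}

local notation "Mat" => Matrix (Fin 2) (Fin 2) (ZMod (p^2))

theorem coe_kerUnit (A : Mat) : (kerUnit A : Mat) = 1 + (p : Mat) * A := by
  rw [← nsmul_eq_mul, ← Nat.cast_smul_eq_nsmul (ZMod (p ^ 2))]
  rfl

theorem kerUnit_add (A B : Mat) : kerUnit (A + B) = kerUnit A * kerUnit B := by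
  ext1
  rw [Units.val_mul, coe_kerUnit, coe_kerUnit, coe_kerUnit, add_mul 1, one_mul, mul_add (_ * A),
    mul_one, natCast_mul_mul_natCast_mul, mul_add]
  abel

theorem kerUnit_zero : kerUnit (0 : Mat) = 1 := by
  ext1
  rw [coe_kerUnit, mul_zero, add_zero, Units.val_one]

theorem kerUnit_neg (A : Mat) : kerUnit (-A) = (kerUnit A)⁻¹ :=
  eq_inv_of_mul_eq_one_left (by rw [← kerUnit_add, neg_add_cancel, kerUnit_zero])

theorem det_kerUnit (A : Mat) : (kerUnit A : Mat).det = 1 + p * A.trace := by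
  change (1 + (p : ZMod (p ^ 2)) • A).det = _
  rw [det_fin_two, trace_fin_two]
  simp only [Matrix.add_apply, Matrix.smul_apply, one_apply_eq, one_apply_ne zero_ne_one,
    one_apply_ne one_ne_zero, smul_eq_mul]
  linear_combination
    (A 0 0 * A 1 1 - A 0 1 * A 1 0) * natCast_mul_self_eq_zero (p := p) (R := ZMod (p ^ 2))

/-- The Lie algebra of `H ∩ ker φ`, lifted to `ℤ/p²`. -/
def lieAlg (H : Subgroup (GL2 (p ^ 2))) : Submodule (ZMod (p ^ 2)) Mat :=
  AddSubgroup.toZModSubmodule (p ^ 2)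
    { carrier := {A | kerUnit A ∈ H}
      add_mem' := fun {A B} hA hB => by
        change kerUnit (A + B) ∈ H; rw [kerUnit_add]; exact mul_mem hA hB
      zero_mem' := by change kerUnit 0 ∈ H; rw [kerUnit_zero]; exact one_mem H
      neg_mem' := fun {A} hA => by change kerUnit (-A) ∈ H; rw [kerUnit_neg]; exact inv_mem hA }

theorem mem_lieAlg {H : Subgroup (GL2 (p ^ 2))} {A : Mat} : A ∈ lieAlg H ↔ kerUnit A ∈ H :=
  Iff.rfl

theorem mem_lieAlg_of_natCast_smul_eq_zero {H : Subgroup (GL2 (p ^ 2))} {A : Mat}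
    (hA : (p : ZMod (p ^ 2)) • A = 0) : A ∈ lieAlg H := by
  have : kerUnit A = 1 := Units.ext (by change 1 + _ = 1; rw [hA, add_zero])
  rw [mem_lieAlg, this]
  exact one_mem H

theorem exists_eq_natCast_mul_of_red_eq_zero [NeZero p] {x : ZMod (p ^ 2)} (hx : red p x = 0) :
    ∃ y, x = p * y := by
  rw [red, ZMod.castHom_apply, ← ZMod.natCast_val, ZMod.natCast_eq_zero_iff] at hx
  obtain ⟨y, hy⟩ := hx
  exact ⟨y, by rw [← ZMod.natCast_zmod_val x, hy, Nat.cast_mul]⟩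

theorem coe_phi (g : GL2 (p ^ 2)) :
    (phi p g : Matrix (Fin 2) (Fin 2) (ZMod p)) = (g : Mat).map (red p) :=
  rfl

theorem det_phi (g : GL2 (p ^ 2)) :
    (phi p g : Matrix (Fin 2) (Fin 2) (ZMod p)).det = red p (g : Mat).det :=
  (RingHom.map_det (red p) (g : Mat)).symm

theorem exists_eq_kerUnit_mul_of_phi_eq [NeZero p] {g h : GL2 (p ^ 2)}
    (hgh : phi p g = phi p h) : ∃ A, g = kerUnit A * h := by
  have hred : ∀ i j, red p ((g * h⁻¹ : GL2 (p ^ 2)) i j - (1 : Mat) i j) = 0 := by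
    intro i j
    have h1 : phi p (g * h⁻¹) = 1 := by rw [map_mul, map_inv, hgh, mul_inv_cancel]
    have := congrArg (fun M : GL2 p => (M : Matrix (Fin 2) (Fin 2) (ZMod p)) i j) h1
    rw [coe_phi, Units.val_one, map_apply] at this
    rw [map_sub, this, one_apply, one_apply]
    split_ifs <;> simp
  choose y hy using fun i j => exists_eq_natCast_mul_of_red_eq_zero (hred i j)
  refine ⟨Matrix.of y, ?_⟩
  rw [← mul_inv_eq_iff_eq_mul]
  ext i j
  change _ = (1 + (p : ZMod (p ^ 2)) • Matrix.of y) i j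
  rw [Matrix.add_apply, Matrix.smul_apply, Matrix.of_apply, smul_eq_mul, ← hy, add_sub_cancel]

variable [Fact p.Prime]

theorem mem_lieAlg_of_mul_self_eq_zero (hp3 : 3 < p) {H : Subgroup (GL2 (p ^ 2))}
    (hSL : ∀ M : GL2 p,
      (↑M : Matrix (Fin 2) (Fin 2) (ZMod p)).det = 1 → M ∈ H.map (phi p))
    {N : Mat} (hN : N * N = 0) (hdet : (1 + N).det = 1) : N ∈ lieAlg H := by
  have hu : ((SpecialLinearGroup.toGL ⟨1 + N, hdet⟩ : GL2 (p ^ 2)) : Mat) = 1 + N := rfl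
  obtain ⟨g, hg, hgu⟩ := hSL (phi p (SpecialLinearGroup.toGL ⟨1 + N, hdet⟩))
    (by rw [det_phi, hu, hdet, map_one])
  obtain ⟨B, rfl⟩ := exists_eq_kerUnit_mul_of_phi_eq hgu
  have hlift : ((kerUnit B * SpecialLinearGroup.toGL ⟨1 + N, hdet⟩ : GL2 (p ^ 2)) : Mat) =
      1 + (N + (p : Mat) * (B + B * N)) := by
    rw [Units.val_mul, coe_kerUnit, hu]
    noncomm_ring
  have hsq : ∀ C : Mat,
      (N + (p : Mat) * C) * (N + (p : Mat) * C) = (p : Mat) * (N * C + C * N) := fun C => by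
    rw [add_mul, mul_add, mul_add, hN, natCast_mul_mul_natCast_mul, ← mul_assoc N,
      ← (Nat.cast_commute p N).eq, mul_assoc, mul_assoc, mul_add]
    abel
  have hpow : (kerUnit B * SpecialLinearGroup.toGL ⟨1 + N, hdet⟩) ^ p = kerUnit N := by
    ext1
    rw [Units.val_pow_eq_pow_val, hlift, one_add_pow_prime_eq_of_mul_self_eq Fact.out hp3
      natCast_mul_self_eq_zero (hsq _), coe_kerUnit, mul_add, ← mul_assoc,
      natCast_mul_self_eq_zero, zero_mul, add_zero]
  rw [mem_lieAlg, ← hpow]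
  exact pow_mem hg p

theorem mem_lieAlg_of_natCast_mul_trace_eq_zero (hp3 : 3 < p) {H : Subgroup (GL2 (p ^ 2))}
    (hSL : ∀ M : GL2 p,
      (↑M : Matrix (Fin 2) (Fin 2) (ZMod p)).det = 1 → M ∈ H.map (phi p))
    {A : Mat} (hA : (p : ZMod (p ^ 2)) * A.trace = 0) : A ∈ lieAlg H := by
  have hE₁₂ : !![0, 1; 0, 0] ∈ lieAlg H := mem_lieAlg_of_mul_self_eq_zero hp3 hSL
    (by ext i j; fin_cases i <;> fin_cases j <;> simp) (by simp [det_fin_two])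
  have hE₂₁ : !![0, 0; 1, 0] ∈ lieAlg H := mem_lieAlg_of_mul_self_eq_zero hp3 hSL
    (by ext i j; fin_cases i <;> fin_cases j <;> simp) (by simp [det_fin_two])
  have hW : !![1, 1; -1, -1] ∈ lieAlg H := mem_lieAlg_of_mul_self_eq_zero hp3 hSL
    (by ext i j; fin_cases i <;> fin_cases j <;> simp) (by simp [det_fin_two])
  have hE₂₂ : A.trace • !![0, 0; 0, 1] ∈ lieAlg H := mem_lieAlg_of_natCast_smul_eq_zero
    (by rw [smul_smul, hA, zero_smul])
  have hdecomp : A = A 0 0 • !![1, 1; -1, -1] + (A 0 1 - A 0 0) • !![0, 1; 0, 0] +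
      (A 1 0 + A 0 0) • !![0, 0; 1, 0] + A.trace • !![0, 0; 0, 1] := by
    rw [trace_fin_two]
    ext i j
    fin_cases i <;> fin_cases j <;> simp
  rw [hdecomp]
  exact add_mem (add_mem (add_mem (Submodule.smul_mem _ _ hW) (Submodule.smul_mem _ _ hE₁₂))
    (Submodule.smul_mem _ _ hE₂₁)) hE₂₂

theorem mem_map_commutator_of_det_eq_one (hp3 : 3 < p) {H : Subgroup (GL2 (p ^ 2))}
    (hSL : ∀ M : GL2 p,
      (↑M : Matrix (Fin 2) (Fin 2) (ZMod p)).det = 1 → M ∈ H.map (phi p))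
    {M : GL2 p} (hM : (M : Matrix (Fin 2) (Fin 2) (ZMod p)).det = 1) :
    M ∈ ⁅H, H⁆.map (phi p) := by
  have hrange : (SpecialLinearGroup.toGL : SL(2, ZMod p) →* GL2 p).range ≤ H.map (phi p) := by
    rintro _ ⟨s, rfl⟩
    exact hSL _ s.det_coe
  have h2 : (2 : ZMod p) ≠ 0 := by
    exact_mod_cast natCast_ne_zero_of_lt (n := 2) (by norm_num) (by omega)
  have h3 : (3 : ZMod p) ≠ 0 := by
    exact_mod_cast natCast_ne_zero_of_lt (n := 3) (by norm_num) hp3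
  have hperfect : commutator SL(2, ZMod p) = ⊤ :=
    SL2.commutator_eq_top h2 fun h => h3 (by linear_combination h)
  have hM' : SpecialLinearGroup.toGL ⟨M, hM⟩ ∈
      (commutator SL(2, ZMod p)).map SpecialLinearGroup.toGL :=
    Subgroup.mem_map_of_mem _ (hperfect ▸ Subgroup.mem_top _)
  rw [show SpecialLinearGroup.toGL ⟨M, hM⟩ = M from Units.ext rfl, commutator_def,
    Subgroup.map_commutator, ← MonoidHom.range_eq_map] at hM'
  rw [Subgroup.map_commutator]
  exact Subgroup.commutator_mono hrange hrange hM'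

theorem ker_det_le_of_forall_det_eq_one_mem_map (hp3 : 3 < p) {H : Subgroup (GL2 (p ^ 2))}
    (hSL : ∀ M : GL2 p,
      (↑M : Matrix (Fin 2) (Fin 2) (ZMod p)).det = 1 → M ∈ H.map (phi p)) :
    (GeneralLinearGroup.det : GL2 (p ^ 2) →* (ZMod (p ^ 2))ˣ).ker ≤ H := by
  intro g hg
  obtain ⟨k, hk, hkg⟩ := mem_map_commutator_of_det_eq_one hp3 hSL (M := phi p g)
    (by rw [det_phi, ← GeneralLinearGroup.val_det_apply, hg, Units.val_one, map_one])
  obtain ⟨A, rfl⟩ := exists_eq_kerUnit_mul_of_phi_eq hkg.symm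
  have hk₁ : GeneralLinearGroup.det k = 1 :=
    Abelianization.commutator_subset_ker _ (Subgroup.commutator_mono le_top le_top hk)
  have hA : (p : ZMod (p ^ 2)) * A.trace = 0 := by
    rw [MonoidHom.mem_ker, map_mul, hk₁, mul_one, Units.ext_iff,
      GeneralLinearGroup.val_det_apply, det_kerUnit, Units.val_one, add_eq_left] at hg
    exact hg
  exact mul_mem (mem_lieAlg_of_natCast_mul_trace_eq_zero hp3 hSL hA)
    (Subgroup.commutator_le_self H hk)

end

/-- Let `p > 3` be prime. Locally conjugate subgroups of
`GL₂(ℤ/p²ℤ)` whose images under `φ` both contain all determinant-`1` elements of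
`GL₂(ℤ/pℤ)` are equal. -/
theorem eq_of_locallyConjugate_SL_le {p : ℕ} [Fact p.Prime] (hp3 : 3 < p)
    (H₁ H₂ : Subgroup (GL2 (p^2)))
    (h : IsLocallyConjugate H₁ H₂)
    (hSL₁ : ∀ M : GL2 p,
      (↑M : Matrix (Fin 2) (Fin 2) (ZMod p)).det = 1 → M ∈ H₁.map (phi p))
    (hSL₂ : ∀ M : GL2 p,
      (↑M : Matrix (Fin 2) (Fin 2) (ZMod p)).det = 1 → M ∈ H₂.map (phi p)) :
    H₁ = H₂ :=
  le_antisymm (h.le_of_ker_le (ker_det_le_of_forall_det_eq_one_mem_map hp3 hSL₂))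
    (h.symm.le_of_ker_le (ker_det_le_of_forall_det_eq_one_mem_map hp3 hSL₁))
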